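/- Conservation of momentum for the truncated Hermite–Vlasov–Poisson system: if (C_0,…,C_{N_H−1}, E, Φ) is a solution of the truncated Hermite–Vlasov–Poisson system, then the function t ↦ ∫_0^L C_1(t,x) dx is constant in t (equivalently, d/dt ∫_0^L C_1(t,x) dx = 0 for all t ≥ 0); hence the momentum v_th² ∫_0^L C_1(t,x) dx is conserved. -/

import Mathlib

/-!
The Vlasov equation for `n = 1` reads `∂ₜC₁ = -v_th (√2 ∂ₓC₂ + ∂ₓC₀) + E C₀ / v_th`, and by
the Poisson equation `v_th E C₀ = E ∂ₓE + ρ₀ E = ∂ₓ(E²/2 - ρ₀ Φ)`. Hence `∂ₜC₁` is the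
`x`-derivative of an `L`-periodic flux, so `∫₀ᴸ ∂ₜC₁ dx = 0`, and exchanging the `x`- and
`t`-integrals shows that `∫₀ᴸ C₁(t, x) dx` does not depend on `t`.
-/

open MeasureTheory intervalIntegral

section PartialDerivatives

variable {f : ℝ → ℝ → ℝ}

theorem differentiableAt_left_of_contDiff_prod
    (hf : ContDiff ℝ 1 fun p : ℝ × ℝ => f p.1 p.2) (t x : ℝ) :
    DifferentiableAt ℝ (fun s => f s x) t := by
  have := hf.differentiable one_ne_zero
  fun_prop

theorem differentiableAt_right_of_contDiff_prod
    (hf : ContDiff ℝ 1 fun p : ℝ × ℝ => f p.1 p.2) (t x : ℝ) : DifferentiableAt ℝ (f t) x := by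
  have := hf.differentiable one_ne_zero
  fun_prop

theorem continuous_deriv_left_of_contDiff_prod (hf : ContDiff ℝ 1 fun p : ℝ × ℝ => f p.1 p.2) :
    Continuous fun p : ℝ × ℝ => deriv (fun s => f s p.2) p.1 := by
  have hpartial : ∀ p : ℝ × ℝ, deriv (fun s => f s p.2) p.1
      = fderiv ℝ (fun p : ℝ × ℝ => f p.1 p.2) p (1, 0) := fun p => by
    have h := (hf.differentiable one_ne_zero p).hasFDerivAt.comp_hasDerivAt p.1
      ((hasDerivAt_id p.1).prodMk (hasDerivAt_const p.1 p.2))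
    exact h.deriv
  simp only [hpartial]
  exact (hf.continuous_fderiv one_ne_zero).clm_apply continuous_const

theorem intervalIntegral_sub_eq_integral_integral_deriv_left
    (hf : ContDiff ℝ 1 fun p : ℝ × ℝ => f p.1 p.2) (a b t₀ t : ℝ) :
    (∫ x in a..b, f t x) - ∫ x in a..b, f t₀ x
      = ∫ s in t₀..t, ∫ x in a..b, deriv (fun s => f s x) s := by
  have hcont : ∀ s, Continuous (f s) := fun s =>
    hf.continuous.comp (continuous_const.prodMk continuous_id)
  have hD := continuous_deriv_left_of_contDiff_prod hf
  have hFTC : ∀ x, f t x - f t₀ x = ∫ s in t₀..t, deriv (fun s => f s x) s := fun x =>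
    (integral_eq_sub_of_hasDerivAt
      (fun s _ => (differentiableAt_left_of_contDiff_prod hf s x).hasDerivAt)
      ((hD.comp (continuous_id.prodMk continuous_const)).intervalIntegrable t₀ t)).symm
  rw [← integral_sub ((hcont t).intervalIntegrable a b) ((hcont t₀).intervalIntegrable a b),
    ← intervalIntegral_intervalIntegral_swap]
  · exact integral_congr fun x _ => hFTC x
  · exact ((hD.comp continuous_swap).continuousOn.integrableOn_compact
      (isCompact_uIcc.prod isCompact_uIcc)).mono_set
      (Set.prod_mono Set.uIoc_subset_uIcc Set.uIoc_subset_uIcc)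

end PartialDerivatives

theorem Function.Periodic.intervalIntegral_eq_zero_of_hasDerivAt {E : Type*}
    [NormedAddCommGroup E] [NormedSpace ℝ E] [CompleteSpace E] {G g : ℝ → E} {T : ℝ}
    (hG : Function.Periodic G T) (hderiv : ∀ x, HasDerivAt G (g x) x)
    (hg : IntervalIntegrable g volume 0 T) : ∫ x in (0 : ℝ)..T, g x = 0 := by
  rw [integral_eq_sub_of_hasDerivAt (fun x _ => hderiv x) hg, ← zero_add T, hG 0, sub_self]

noncomputable def momentumFlux (vth ρ0 : ℝ) (c0 c2 e φ : ℝ → ℝ) (x : ℝ) : ℝ :=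
  -vth * (√2 * c2 x + c0 x) + (e x ^ 2 / 2 - ρ0 * φ x) / vth ^ 2

theorem hasDerivAt_momentumFlux {vth ρ0 x : ℝ} {c0 c2 e φ : ℝ → ℝ} (hvth : vth ≠ 0)
    (hc0 : DifferentiableAt ℝ c0 x) (hc2 : DifferentiableAt ℝ c2 x)
    (he : HasDerivAt e (vth * c0 x - ρ0) x) (hφ : HasDerivAt φ (-e x) x) :
    HasDerivAt (momentumFlux vth ρ0 c0 c2 e φ)
      (-vth * (√2 * deriv c2 x + deriv c0 x) + e x * c0 x / vth) x := by
  have h := (((hc2.hasDerivAt.const_mul √2).add hc0.hasDerivAt).const_mul (-vth)).add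
    (((he.pow 2).div_const 2 |>.sub (hφ.const_mul ρ0)).div_const (vth ^ 2))
  refine h.congr_deriv ?_
  field_simp
  ring

theorem Function.Periodic.momentumFlux {vth ρ0 L : ℝ} {c0 c2 e φ : ℝ → ℝ}
    (hc0 : Function.Periodic c0 L) (hc2 : Function.Periodic c2 L)
    (he : Function.Periodic e L) (hφ : Function.Periodic φ L) :
    Function.Periodic (momentumFlux vth ρ0 c0 c2 e φ) L := fun x => by
  simp only [_root_.momentumFlux, hc0 x, hc2 x, he x, hφ x]

theorem truncated_hermite_vlasov_poisson_momentum_conservation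
    (L vth ρ0 : ℝ) (NH : ℕ) (hvth : 0 < vth) (hNH : 3 ≤ NH)
    (C : ℕ → ℝ → ℝ → ℝ) (E Φ : ℝ → ℝ → ℝ)
    -- regularity: each `C n` and `E` are C¹ in (t,x), `Φ` is C¹ and C² in x
    (hC1 : ∀ n, ContDiff ℝ 1 (fun p : ℝ × ℝ => C n p.1 p.2))
    (hE1 : ContDiff ℝ 1 (fun p : ℝ × ℝ => E p.1 p.2))
    (hΦ2 : ContDiff ℝ 2 (fun p : ℝ × ℝ => Φ p.1 p.2))
    -- L-periodicity in space
    (hCper : ∀ n t, Function.Periodic (fun x => C n t x) L)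
    (hEper : ∀ t, Function.Periodic (fun x => E t x) L)
    (hΦper : ∀ t, Function.Periodic (fun x => Φ t x) L)
    -- the truncated Hermite expansion of the Vlasov equation
    -- (the `n = 0` case of `C (n-1)` is irrelevant since `√0 = 0`)
    (hVlasov : ∀ n, n < NH → ∀ t x,
      deriv (fun s => C n s x) t
        + vth * (Real.sqrt (n + 1) * deriv (fun y => C (n + 1) t y) x
            + Real.sqrt n * deriv (fun y => C (n - 1) t y) x)
        - (Real.sqrt n / vth) * E t x * C (n - 1) t x = 0)
    -- the electric field and the Poisson equation
    (hE : ∀ t x, E t x = -deriv (fun y => Φ t y) x)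
    (hPoisson : ∀ t x, deriv (fun y => E t y) x = vth * C 0 t x - ρ0) :
    ∀ t, 0 ≤ t →
      vth ^ 2 * ∫ x in (0:ℝ)..L, C 1 t x = vth ^ 2 * ∫ x in (0:ℝ)..L, C 1 0 x := by
  intro t _
  have hflux : ∀ s x, HasDerivAt (momentumFlux vth ρ0 (C 0 s) (C 2 s) (E s) (Φ s))
      (deriv (fun s => C 1 s x) s) x := fun s x => by
    have hVlasov₁ := hVlasov 1 (by omega) s x
    simp only [Nat.cast_one, one_add_one_eq_two, Real.sqrt_one, Nat.sub_self, one_mul]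
      at hVlasov₁
    have hEx : HasDerivAt (E s) (vth * C 0 s x - ρ0) x :=
      hPoisson s x ▸ (differentiableAt_right_of_contDiff_prod hE1 s x).hasDerivAt
    have hΦx : HasDerivAt (Φ s) (-E s x) x := by
      rw [hE s x, neg_neg]
      exact (differentiableAt_right_of_contDiff_prod (hΦ2.of_le one_le_two) s x).hasDerivAt
    convert hasDerivAt_momentumFlux hvth.ne'
      (differentiableAt_right_of_contDiff_prod (hC1 0) s x)
      (differentiableAt_right_of_contDiff_prod (hC1 2) s x) hEx hΦx using 1
    linear_combination hVlasov₁
  have hconserved : ∀ s, ∫ x in (0:ℝ)..L, deriv (fun s => C 1 s x) s = 0 := fun s =>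
    Function.Periodic.intervalIntegral_eq_zero_of_hasDerivAt
      ((hCper 0 s).momentumFlux (hCper 2 s) (hEper s) (hΦper s)) (hflux s)
      (((continuous_deriv_left_of_contDiff_prod (hC1 1)).comp
        (continuous_const.prodMk continuous_id)).intervalIntegrable 0 L)
  rw [← sub_eq_zero, ← mul_sub,
    intervalIntegral_sub_eq_integral_integral_deriv_left (hC1 1) 0 L 0 t]
  simp [hconserved]
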